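/- Let P be an orthogonal projection and U a unitary on a finite-dimensional Hilbert space F, let z₁ be in the open unit disc, and let Ψ(z) = P(I - zU*P^⊥)⁻¹U*P|_{Ran P}. If there is a nonzero w ∈ Ran P with Ψ(z₁)w = 0, then v := (I - z₁U*P^⊥)⁻¹U*Pw is a nonzero vector satisfying P^⊥Uv = z₁v and U*Pv = 0. -/

import Mathlib

open ContinuousLinearMap

/-!
Since `U*` is an isometry and `P^⊥` an orthogonal projection, `‖z₁U*P^⊥‖ < 1`, so the Neumann
series makes `I - z₁U*P^⊥` invertible and `v` solves `v - z₁U*P^⊥v = U*w`. The hypothesis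
`Ψ(z₁)w = 0` says `Pv = 0`, so `P^⊥v = v` and applying `U` gives `Uv = w + z₁v`. Projecting
with `P^⊥`, which kills `w ∈ Ran P`, yields `P^⊥Uv = z₁v`; and `v = 0` would force `w = 0`.
-/

variable {𝕜 H : Type*} [RCLike 𝕜] [NormedAddCommGroup H] [InnerProductSpace 𝕜 H] [CompleteSpace H]

lemma norm_adjoint_le_one_of_comp_adjoint_eq_one {U : H →L[𝕜] H} (hU : U ∘L adjoint U = 1) :
    ‖adjoint U‖ ≤ 1 := by
  have hiso : ∀ x, ‖adjoint U x‖ = ‖x‖ :=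
    (adjoint U).norm_map_iff_adjoint_comp_self.mpr (by rwa [adjoint_adjoint])
  exact opNorm_le_bound _ zero_le_one fun x ↦ by rw [hiso, one_mul]

lemma isUnit_one_sub_smul_adjoint_comp_one_sub {P U : H →L[𝕜] H} (hP : IsStarProjection P)
    (hU : U ∘L adjoint U = 1) {z : 𝕜} (hz : ‖z‖ < 1) :
    IsUnit (1 - z • (adjoint U ∘L (1 - P))) := by
  refine isUnit_one_sub_of_norm_lt_one ?_
  have hcontr : ‖adjoint U ∘L (1 - P)‖ ≤ 1 := (opNorm_comp_le _ _).trans <|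
    mul_le_one₀ (norm_adjoint_le_one_of_comp_adjoint_eq_one hU) (norm_nonneg _)
      (hP.one_sub.norm_le _)
  calc ‖z • (adjoint U ∘L (1 - P))‖ ≤ ‖z‖ * ‖adjoint U ∘L (1 - P)‖ := opNorm_smul_le _ _
    _ ≤ ‖z‖ * 1 := mul_le_mul_of_nonneg_left hcontr (norm_nonneg _)
    _ < 1 := by rwa [mul_one]

lemma apply_eq_add_smul_of_one_sub_smul_adjoint_comp_one_sub_apply {P U : H →L[𝕜] H}
    (hU : U ∘L adjoint U = 1) {z : 𝕜} {v w : H} (hPv : P v = 0)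
    (h : (1 - z • (adjoint U ∘L (1 - P)) : H →L[𝕜] H) v = adjoint U w) :
    U v = w + z • v := by
  have hUUs : ∀ y, U (adjoint U y) = y := fun y ↦ by rw [← comp_apply, hU, one_apply_eq_self]
  have h' : v - z • adjoint U v = adjoint U w := by simpa [hPv] using h
  exact eq_add_of_sub_eq (by simpa [hUUs] using congrArg U h')

theorem inner_to_pencil_zero_case {n : ℕ}
    (P U : EuclideanSpace ℂ (Fin n) →L[ℂ] EuclideanSpace ℂ (Fin n))
    (hP : IsSelfAdjoint P) (hP2 : P ∘L P = P)
    (hU2 : U ∘L adjoint U = 1)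
    (z₁ : ℂ) (hz₁ : ‖z₁‖ < 1)
    (R : EuclideanSpace ℂ (Fin n) →L[ℂ] EuclideanSpace ℂ (Fin n))
    (hR : R = Ring.inverse ((1 : EuclideanSpace ℂ (Fin n) →L[ℂ] EuclideanSpace ℂ (Fin n))
        - z₁ • (adjoint U ∘L (1 - P))))
    (w : EuclideanSpace ℂ (Fin n)) (hw : w ≠ 0) (hwP : P w = w)
    (hΨ : (P ∘L R ∘L (adjoint U ∘L P)) w = 0)
    (v : EuclideanSpace ℂ (Fin n)) (hv : v = R ((adjoint U) (P w))) :
    v ≠ 0 ∧ ((1 - P) ∘L U) v = z₁ • v ∧ (adjoint U ∘L P) v = 0 := by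
  have hTR : (1 - z₁ • (adjoint U ∘L (1 - P))) * R = 1 := hR ▸
    Ring.mul_inverse_cancel _ (isUnit_one_sub_smul_adjoint_comp_one_sub ⟨hP2, hP⟩ hU2 hz₁)
  have hPv : P v = 0 := by simpa [hv] using hΨ
  have hUv : U v = w + z₁ • v :=
    apply_eq_add_smul_of_one_sub_smul_adjoint_comp_one_sub_apply hU2 hPv
      (by rw [hv, hwP, ← mul_apply_eq_comp, hTR, one_apply_eq_self])
  refine ⟨fun hv0 ↦ hw ?_, ?_, by simp [hPv]⟩
  · simpa [hv0] using hUv.symm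
  · simp [hUv, hwP, hPv]
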